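/- arXiv:2007.02554 — 3 statements merged into one kernel-verified Lean document; each statement's English description precedes it below -/
import Mathlib

section
/- The sum of the series ∑_{n=1}^∞ (-1)^n/(1+n^2) equals (π/sinh(π) − 1)/2. -/
open Real

namespace StmtAux

open Complex intervalIntegral

lemma neg_one_zpow_sq (m : ℤ) : ((-1 : ℂ)) ^ m * ((-1 : ℂ)) ^ m = 1 := by
  rw [← zpow_add₀ (by norm_num : (-1 : ℂ) ≠ 0)]
  rw [show m + m = 2 * m by ring, zpow_mul]
  norm_num

lemma neg_one_zpow_neg (m : ℤ) : ((-1 : ℂ)) ^ (-m) = (-1 : ℂ) ^ m := by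
  rw [zpow_neg]
  exact inv_eq_of_mul_eq_one_left (neg_one_zpow_sq m)

lemma neg_one_zpow_neg_real (m : ℤ) : ((-1 : ℝ)) ^ (-m) = (-1 : ℝ) ^ m := by
  rw [zpow_neg]
  refine inv_eq_of_mul_eq_one_left ?_
  rw [← zpow_add₀ (by norm_num : (-1 : ℝ) ≠ 0)]
  rw [show m + m = 2 * m by ring, zpow_mul]
  norm_num

lemma exp_int_pi (m : ℤ) : Complex.exp ((m : ℂ) * (π : ℂ) * I) = (-1 : ℂ) ^ m := by
  rw [show ((m : ℂ) * (π : ℂ) * I) = (m : ℂ) * ((π : ℂ) * I) by ring,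
    Complex.exp_int_mul, Complex.exp_pi_mul_I]

lemma one_sub_ne (n : ℤ) : (1 : ℂ) - (n : ℂ) * I ≠ 0 := by
  intro h
  have := congrArg Complex.re h
  simp at this

lemma neg_one_sub_ne (n : ℤ) : (-1 : ℂ) - (n : ℂ) * I ≠ 0 := by
  intro h
  have := congrArg Complex.re h
  simp at this

lemma one_add_sq_ne (n : ℤ) : (1 : ℂ) + (n : ℂ) ^ 2 ≠ 0 := by
  have : (1 : ℂ) + (n : ℂ) ^ 2 = -((1 - (n : ℂ) * I) * (-1 - (n : ℂ) * I)) := by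
    have : I ^ 2 = -1 := Complex.I_sq
    ring_nf
    rw [Complex.I_sq]
    ring
  rw [this]
  exact neg_ne_zero.mpr (mul_ne_zero (one_sub_ne n) (neg_one_sub_ne n))

lemma coeff (n : ℤ) :
    fourierCoeffOn (by linarith [Real.pi_pos] : (-π : ℝ) < -π + 2 * π)
      (fun x : ℝ => Complex.cosh x) n
    = (-1 : ℂ) ^ n * Real.sinh π / (π * (1 + (n : ℂ) ^ 2)) := by
  rw [fourierCoeffOn_eq_integral]
  have hπ : (π : ℝ) ≠ 0 := Real.pi_ne_zero
  have key : ∀ x : ℝ, (fourier (-n) (x : AddCircle ((-π + 2 * π) - -π)) : ℂ) •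
      Complex.cosh (x : ℂ)
      = (1 / 2 : ℂ) * Complex.exp ((1 - (n : ℂ) * I) * x)
        + (1 / 2 : ℂ) * Complex.exp ((-1 - (n : ℂ) * I) * x) := by
    intro x
    simp only [Circle.smul_def, smul_eq_mul]
    rw [fourier_coe_apply, Complex.cosh]
    have harg : 2 * (π : ℂ) * I * (-n : ℤ) * (x : ℂ) / (((-π + 2 * π) - -π : ℝ) : ℂ)
        = -((n : ℂ) * x * I) := by
      have h2 : (((-π + 2 * π) - -π : ℝ) : ℂ) = 2 * (π : ℂ) := by push_cast; ring
      rw [h2]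
      have h2π : (2 : ℂ) * (π : ℂ) ≠ 0 := by
        simp [Complex.ofReal_ne_zero, hπ]
      field_simp
      push_cast
      ring
    rw [harg]
    rw [show Complex.exp (-((n : ℂ) * x * I)) * ((Complex.exp x + Complex.exp (-x)) / 2)
        = (1/2 : ℂ) * (Complex.exp (-((n : ℂ) * x * I)) * Complex.exp x)
          + (1/2 : ℂ) * (Complex.exp (-((n : ℂ) * x * I)) * Complex.exp (-x)) by ring,
      ← Complex.exp_add, ← Complex.exp_add]
    ring_nf
  rw [intervalIntegral.integral_congr (fun x _ => key x)]
  have i1 : IntervalIntegrable (fun x : ℝ => (1/2 : ℂ) * Complex.exp ((1 - (n : ℂ) * I) * x))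
      MeasureTheory.volume (-π) (-π + 2 * π) :=
    (Continuous.intervalIntegrable (by continuity) _ _)
  have i2 : IntervalIntegrable (fun x : ℝ => (1/2 : ℂ) * Complex.exp ((-1 - (n : ℂ) * I) * x))
      MeasureTheory.volume (-π) (-π + 2 * π) :=
    (Continuous.intervalIntegrable (by continuity) _ _)
  rw [intervalIntegral.integral_add i1 i2, intervalIntegral.integral_const_mul,
    intervalIntegral.integral_const_mul, integral_exp_mul_complex (one_sub_ne n),
    integral_exp_mul_complex (neg_one_sub_ne n)]
  -- evaluate the exponentials
  set w : ℂ := (-1 : ℂ) ^ n with hw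
  have e1 : Complex.exp ((1 - (n : ℂ) * I) * ((-π + 2*π : ℝ) : ℂ)) = Real.exp π * w := by
    rw [show ((1 : ℂ) - (n : ℂ) * I) * ((-π + 2*π : ℝ) : ℂ)
        = (π : ℂ) + (-n : ℤ) * (π : ℂ) * I by push_cast; ring,
      Complex.exp_add, exp_int_pi, neg_one_zpow_neg, Complex.ofReal_exp]
  have e2 : Complex.exp ((1 - (n : ℂ) * I) * ((-π : ℝ) : ℂ)) = Real.exp (-π) * w := by
    rw [show ((1 : ℂ) - (n : ℂ) * I) * ((-π : ℝ) : ℂ)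
        = (-π : ℂ) + (n : ℤ) * (π : ℂ) * I by push_cast; ring,
      Complex.exp_add, exp_int_pi, Complex.ofReal_exp, Complex.ofReal_neg]
  have e3 : Complex.exp ((-1 - (n : ℂ) * I) * ((-π + 2*π : ℝ) : ℂ)) = Real.exp (-π) * w := by
    rw [show ((-1 : ℂ) - (n : ℂ) * I) * ((-π + 2*π : ℝ) : ℂ)
        = (-π : ℂ) + (-n : ℤ) * (π : ℂ) * I by push_cast; ring,
      Complex.exp_add, exp_int_pi, neg_one_zpow_neg, Complex.ofReal_exp, Complex.ofReal_neg]
  have e4 : Complex.exp ((-1 - (n : ℂ) * I) * ((-π : ℝ) : ℂ)) = Real.exp π * w := by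
    rw [show ((-1 : ℂ) - (n : ℂ) * I) * ((-π : ℝ) : ℂ)
        = (π : ℂ) + (n : ℤ) * (π : ℂ) * I by push_cast; ring,
      Complex.exp_add, exp_int_pi, Complex.ofReal_exp]
  rw [e1, e2, e3, e4]
  have hsinh : (Real.sinh π : ℂ) = ((Real.exp π : ℂ) - (Real.exp (-π) : ℂ)) / 2 := by
    rw [Real.sinh_eq]; push_cast; ring
  have hsq : (1 : ℂ) + (n : ℂ) ^ 2 = -((1 - (n : ℂ) * I) * (-1 - (n : ℂ) * I)) := by
    ring_nf
    rw [Complex.I_sq]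
    ring
  rw [hsinh, show (-π + 2 * π - -π : ℝ) = 2 * π by ring, Complex.real_smul]
  have hπC : ((π : ℝ) : ℂ) ≠ 0 := Complex.ofReal_ne_zero.mpr hπ
  field_simp [one_sub_ne n, neg_one_sub_ne n, one_add_sq_ne n]
  ring_nf
  rw [Complex.I_sq]
  push_cast
  field_simp
  ring

lemma summable_nat : Summable (fun n : ℕ => 1 / (1 + (n : ℝ) ^ 2)) := by
  have h1 : Summable (fun n : ℕ => 1 / ((n : ℝ)) ^ 2) :=
    Real.summable_one_div_nat_pow.mpr (by norm_num)
  have h2 : Summable (fun n : ℕ => 1 / ((n : ℝ) + 1) ^ 2) := by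
    have := (summable_nat_add_iff 1).mpr h1
    refine this.congr fun n => ?_
    push_cast
    ring
  refine Summable.of_nonneg_of_le (fun n => by positivity)
    (fun n => ?_) (h2.mul_left 2)
  rw [div_le_iff₀ (by positivity)]
  have hn : (0:ℝ) ≤ ((n:ℝ) - 1) ^ 2 := sq_nonneg _
  have : ((n:ℝ) + 1) ^ 2 ≤ 2 * (1 + (n:ℝ) ^ 2) := by nlinarith
  rw [show (2 : ℝ) * (1 / ((n:ℝ) + 1) ^ 2) = 2 / ((n:ℝ)+1)^2 by ring,
    div_mul_eq_mul_div, le_div_iff₀ (by positivity)]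
  nlinarith

lemma summable_int : Summable (fun n : ℤ => 1 / (1 + (n : ℝ) ^ 2)) := by
  refine Summable.of_nat_of_neg_add_one ?_ ?_
  · exact summable_nat.congr fun n => by push_cast; ring
  · have := (summable_nat_add_iff 1).mpr summable_nat
    refine this.congr fun n => ?_
    push_cast
    ring

end StmtAux

open StmtAux

theorem stmt_0 :
    ∑' n : ℕ, (-1 : ℝ) ^ (n + 1) / (1 + ((n : ℝ) + 1) ^ 2) =
      (π / Real.sinh π - 1) / 2 := by
  have hπ := Real.pi_pos
  haveI : Fact (0 < 2 * π) := ⟨by linarith⟩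
  set g : ℝ → ℂ := fun x => Complex.cosh x with hg
  have hcont : Continuous g := Complex.continuous_cosh.comp Complex.continuous_ofReal
  have hper : g (-π) = g (-π + 2 * π) := by
    show Complex.cosh _ = Complex.cosh _
    rw [show ((-π + 2 * π : ℝ) : ℂ) = (π : ℂ) by push_cast; ring,
      show ((-π : ℝ) : ℂ) = -(π : ℂ) by push_cast; ring, Complex.cosh_neg]
  set F : C(AddCircle (2 * π), ℂ) :=
    ⟨AddCircle.liftIco (2 * π) (-π) g, AddCircle.liftIco_continuous hper hcont.continuousOn⟩
    with hF
  have hcoeff : ∀ n : ℤ, fourierCoeff (⇑F) n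
      = (-1 : ℂ) ^ n * Real.sinh π / (π * (n : ℂ) ^ 2 + π) := by
    intro n
    show fourierCoeff (AddCircle.liftIco (2 * π) (-π) g) n = _
    rw [fourierCoeff_liftIco_eq]
    rw [coeff n]
    ring
  have hsummC : Summable (fourierCoeff (⇑F)) := by
    apply Summable.of_norm
    have heq : (fun n : ℤ => ‖fourierCoeff (⇑F) n‖)
        = fun n : ℤ => (|Real.sinh π| / π) * (1 / (1 + (n : ℝ) ^ 2)) := by
      funext n
      rw [hcoeff n,
        show ((π : ℂ) * (n : ℂ) ^ 2 + π) = (((π * (n : ℝ) ^ 2 + π : ℝ)) : ℂ) by push_cast; ring,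
        norm_div, norm_mul, norm_zpow, norm_neg, norm_one, one_zpow, one_mul,
        Complex.norm_real, Complex.norm_real, Real.norm_eq_abs, Real.norm_eq_abs,
        abs_of_pos (by positivity : (0 : ℝ) < π * (n : ℝ) ^ 2 + π)]
      rw [div_mul_div_comm, mul_one]
      congr 1
      ring
    rw [heq]
    exact summable_int.mul_left _
  have hs := has_pointwise_sum_fourier_series_of_summable hsummC (0 : AddCircle (2 * π))
  simp only [fourier_eval_zero, smul_eq_mul, mul_one] at hs
  have hF0 : F (0 : AddCircle (2 * π)) = 1 := by
    show AddCircle.liftIco (2 * π) (-π) g 0 = 1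
    rw [← QuotientAddGroup.mk_zero, AddCircle.liftIco_coe_apply
      (by constructor <;> [linarith; linarith] : (0 : ℝ) ∈ Set.Ico (-π) (-π + 2 * π))]
    show Complex.cosh 0 = 1
    simp
  rw [hF0] at hs
  simp only [hcoeff] at hs
  -- real series
  have h2 := (summable_nat_add_iff (f := fun n : ℕ => 1 / (1 + (n : ℝ) ^ 2)) 1).mpr summable_nat
  have hsr : Summable (fun n : ℕ => (-1 : ℝ) ^ (n + 1) / (1 + ((n : ℝ) + 1) ^ 2)) := by
    apply Summable.of_norm
    refine h2.congr fun n => ?_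
    rw [Real.norm_eq_abs, abs_div, abs_pow, abs_neg, abs_one, one_pow,
      abs_of_pos (by positivity)]
    push_cast
    ring
  obtain ⟨s, hsS⟩ := hsr
  rw [hsS.tsum_eq]
  set fR : ℤ → ℝ := fun m => (-1 : ℝ) ^ m / (1 + (m : ℝ) ^ 2) with hfR
  have hshift : (fun n : ℕ => fR ((n : ℤ) + 1))
      = fun n : ℕ => (-1 : ℝ) ^ (n + 1) / (1 + ((n : ℝ) + 1) ^ 2) := by
    funext n
    simp only [hfR]
    rw [show ((n : ℤ) + 1) = ((n + 1 : ℕ) : ℤ) by push_cast; ring, zpow_natCast]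
    push_cast
    ring
  have hnat : HasSum (fun n : ℕ => fR n) (s + 1) := by
    have h1 : HasSum (fun n : ℕ => fR ((n : ℤ) + 1)) s := by rw [hshift]; exact hsS
    have h1' : HasSum (fun n : ℕ => fR ((n + 1 : ℕ))) s := by
      refine h1.congr_fun fun n => ?_
      norm_num
    have := (hasSum_nat_add_iff (f := fun n : ℕ => fR n) 1).mp h1'
    simpa [hfR] using this
  have hneg : HasSum (fun n : ℕ => fR (-((n : ℤ) + 1))) s := by
    refine hsS.congr_fun fun n => ?_
    simp only [hfR]
    rw [show (-((n : ℤ) + 1)) = -(((n + 1 : ℕ)) : ℤ) by push_cast; ring,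
      neg_one_zpow_neg_real, zpow_natCast]
    push_cast
    ring
  have hZR : HasSum fR (s + 1 + s) := hnat.of_nat_of_neg_add_one hneg
  have hZC : HasSum (fun m : ℤ => ((fR m : ℝ) : ℂ)) (((s + 1 + s : ℝ)) : ℂ) := by
    simpa using hZR.mapL Complex.ofRealCLM
  have hsinh0 : Real.sinh π ≠ 0 := ne_of_gt (Real.sinh_pos_iff.mpr hπ)
  have hπ0 : (π : ℝ) ≠ 0 := ne_of_gt hπ
  have hs2 := hs.mul_left ((π : ℂ) / (Real.sinh π : ℂ))
  have hfeq : (fun m : ℤ => ((π : ℂ) / (Real.sinh π : ℂ))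
        * ((-1 : ℂ) ^ m * (Real.sinh π : ℂ) / ((π : ℂ) * (m : ℂ) ^ 2 + π)))
      = fun m : ℤ => ((fR m : ℝ) : ℂ) := by
    funext m
    simp only [hfR]
    have hd : (π : ℂ) * (m : ℂ) ^ 2 + π ≠ 0 := by
      rw [show (π : ℂ) * (m : ℂ) ^ 2 + π = ((π * (m : ℝ) ^ 2 + π : ℝ) : ℂ) by push_cast; ring]
      exact_mod_cast ne_of_gt (by positivity : (0 : ℝ) < π * (m : ℝ) ^ 2 + π)
    have hd2 : (1 : ℂ) + (m : ℂ) ^ 2 ≠ 0 := StmtAux.one_add_sq_ne m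
    have hsC : ((Real.sinh π : ℝ) : ℂ) ≠ 0 := Complex.ofReal_ne_zero.mpr hsinh0
    have hπC : ((π : ℝ) : ℂ) ≠ 0 := Complex.ofReal_ne_zero.mpr hπ0
    have hsC' : Complex.sinh (π : ℂ) ≠ 0 := by rwa [Complex.ofReal_sinh] at hsC
    push_cast [Complex.ofReal_zpow]
    rw [div_mul_div_comm, div_eq_div_iff (mul_ne_zero hsC' ?_) hd2]
    · ring
    · exact hd
  rw [hfeq] at hs2
  have huniq := hs2.unique hZC
  have hre : (π / Real.sinh π : ℝ) = s + 1 + s := by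
    have : ((π / Real.sinh π : ℝ) : ℂ) = (((s + 1 + s : ℝ)) : ℂ) := by
      rw [← huniq]; push_cast; ring
    exact_mod_cast this
  linarith
end

section
/- For every positive integer n, the sum ∑_{l=1, l≠n}^∞ 1/(l^2 − n^2) equals 3/(4n^2). -/
open Real Finset Filter Topology

private lemma tail_partial (n : ℕ) (hn : 0 < n) (M : ℕ) :
    ∑ m ∈ range M, (1:ℝ)/(((m:ℝ)+1)*((m:ℝ)+1+2*n)) =
      (1/(2*(n:ℝ))) * ((∑ k ∈ range (2*n), 1/((k:ℝ)+1))
        - ∑ j ∈ range (2*n), 1/((M:ℝ)+(j:ℝ)+1)) := by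
  have hn' : (0:ℝ) < n := by exact_mod_cast hn
  induction M with
  | zero => simp
  | succ M ih =>
    rw [Finset.sum_range_succ, ih]
    have key : (∑ j ∈ range (2*n), 1/((M:ℝ)+(j:ℝ)+1))
        - (∑ j ∈ range (2*n), 1/(((M+1:ℕ):ℝ)+(j:ℝ)+1))
        = 1/((M:ℝ)+1) - 1/((M:ℝ)+2*n+1) := by
      rw [← Finset.sum_sub_distrib]
      have : ∀ j ∈ range (2*n),
          1/((M:ℝ)+(j:ℝ)+1) - 1/(((M+1:ℕ):ℝ)+(j:ℝ)+1)
          = (fun j : ℕ => 1/((M:ℝ)+(j:ℝ)+1)) j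
            - (fun j : ℕ => 1/((M:ℝ)+(j:ℝ)+1)) (j+1) := by
        intro j _
        push_cast
        ring_nf
      rw [Finset.sum_congr rfl this, Finset.sum_range_sub']
      push_cast
      ring_nf
    have hM1 : (0:ℝ) < (M:ℝ)+1 := by positivity
    have hM2 : (0:ℝ) < (M:ℝ)+1+2*n := by positivity
    have hM3 : (0:ℝ) < (M:ℝ)+2*n+1 := by positivity
    have hterm : (1:ℝ)/(((M:ℝ)+1)*((M:ℝ)+1+2*n))
        = (1/(2*(n:ℝ))) * (1/((M:ℝ)+1) - 1/((M:ℝ)+2*n+1)) := by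
      rw [div_sub_div _ _ hM1.ne' hM3.ne']
      rw [div_mul_div_comm]
      rw [div_eq_div_iff (by positivity) (by positivity)]
      ring
    rw [hterm]
    have hshift : (∑ j ∈ range (2*n), 1/(((M+1:ℕ):ℝ)+(j:ℝ)+1))
        = (∑ j ∈ range (2*n), 1/((M:ℝ)+(j:ℝ)+1))
          - (1/((M:ℝ)+1) - 1/((M:ℝ)+2*n+1)) := by
      rw [← key]; ring
    rw [hshift]
    ring

private lemma tail_summable (n : ℕ) :
    Summable (fun m : ℕ => (1:ℝ)/(((m:ℝ)+1)*((m:ℝ)+1+2*n))) := by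
  have h2 : Summable (fun m : ℕ => (1:ℝ)/(((m:ℝ)+1)^2) ) := by
    have := (Real.summable_one_div_nat_pow (p := 2)).2 (by norm_num)
    have := (summable_nat_add_iff (f := fun m : ℕ => (1:ℝ)/((m:ℝ))^2) 1).2 this
    simpa using this
  refine Summable.of_nonneg_of_le (fun m => by positivity) (fun m => ?_) h2
  have h1 : (0:ℝ) < (m:ℝ)+1 := by positivity
  rw [div_le_div_iff₀ (by positivity) (by positivity)]
  nlinarith [h1, Nat.cast_nonneg (α := ℝ) n]

private lemma tail_hasSum (n : ℕ) (hn : 0 < n) :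
    HasSum (fun m : ℕ => (1:ℝ)/(((m:ℝ)+1)*((m:ℝ)+1+2*n)))
      ((1/(2*(n:ℝ))) * ∑ k ∈ range (2*n), 1/((k:ℝ)+1)) := by
  have hs := tail_summable n
  rw [hs.hasSum_iff_tendsto_nat]
  have heq : (fun M : ℕ => ∑ m ∈ range M, (1:ℝ)/(((m:ℝ)+1)*((m:ℝ)+1+2*n)))
      = fun M : ℕ => (1/(2*(n:ℝ))) * ((∑ k ∈ range (2*n), 1/((k:ℝ)+1))
        - ∑ j ∈ range (2*n), 1/((M:ℝ)+(j:ℝ)+1)) := by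
    funext M; exact tail_partial n hn M
  rw [heq]
  have hR : Tendsto (fun M : ℕ => ∑ j ∈ range (2*n), 1/((M:ℝ)+(j:ℝ)+1)) atTop (𝓝 0) := by
    apply squeeze_zero (fun M => by positivity)
      (g := fun M : ℕ => (2*n : ℝ) * (1/((M:ℝ)+1)))
    · intro M
      calc ∑ j ∈ range (2*n), 1/((M:ℝ)+(j:ℝ)+1)
          ≤ ∑ _j ∈ range (2*n), 1/((M:ℝ)+1) := by
            apply Finset.sum_le_sum
            intro j _
            apply div_le_div_of_nonneg_left (by norm_num) (by positivity)
            have : (0:ℝ) ≤ (j:ℝ) := Nat.cast_nonneg j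
            linarith
        _ = (2*n : ℝ) * (1/((M:ℝ)+1)) := by
            rw [Finset.sum_const, card_range]; push_cast; ring
    · have := tendsto_one_div_add_atTop_nhds_zero_nat (𝕜 := ℝ)
      simpa using this.const_mul (2*n : ℝ)
  have hT := (tendsto_const_nhds (x := (∑ k ∈ range (2*n), 1/((k:ℝ)+1))) (f := atTop (α := ℕ))).sub hR
  have := hT.const_mul (1/(2*(n:ℝ)))
  simpa using this

private lemma finite_part (n : ℕ) (hn : 0 < n) :
    ∑ l ∈ range (n+1), (if l = 0 ∨ l = n then 0 else 1 / ((l : ℝ) ^ 2 - (n : ℝ) ^ 2))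
      = 3 / (4 * (n:ℝ)^2) - (1/(2*(n:ℝ))) * ∑ k ∈ range (2*n), 1/((k:ℝ)+1) := by
  obtain ⟨p, rfl⟩ : ∃ p, n = p + 1 := ⟨n - 1, by omega⟩
  set n := p + 1 with hnp
  have hn' : (0:ℝ) < n := by positivity
  rw [Finset.sum_range_succ, if_pos (Or.inr rfl), add_zero]
  have step1 : ∑ l ∈ range n, (if l = 0 ∨ l = n then 0 else 1 / ((l : ℝ) ^ 2 - (n : ℝ) ^ 2))
      = -(1/(2*(n:ℝ))) * ((∑ l ∈ range n, (if l = 0 then 0 else 1/((n:ℝ) - l)))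
        + (∑ l ∈ range n, (if l = 0 then 0 else 1/((n:ℝ) + l)))) := by
    rw [← Finset.sum_add_distrib, Finset.mul_sum]
    apply Finset.sum_congr rfl
    intro l hl
    have hln : l < n := Finset.mem_range.mp hl
    by_cases h0 : l = 0
    · simp [h0]
    · rw [if_neg (by simp [h0, Nat.ne_of_lt hln]), if_neg h0, if_neg h0]
      have h1 : (l:ℝ) < n := by exact_mod_cast hln
      have h2 : (0:ℝ) < (l:ℝ) := by exact_mod_cast Nat.pos_of_ne_zero h0
      have hne1 : (n:ℝ) - l ≠ 0 := by linarith
      have hne2 : (n:ℝ) + l ≠ 0 := by linarith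
      have hne3 : (l:ℝ)^2 - (n:ℝ)^2 ≠ 0 := by nlinarith
      field_simp
      ring
  rw [step1]
  have hG1 : (∑ l ∈ range n, (if l = 0 then 0 else 1/((n:ℝ) - l)))
      = ∑ k ∈ range p, 1/((k:ℝ)+1) := by
    rw [← Finset.sum_range_reflect (fun l => if l = 0 then 0 else 1/((n:ℝ) - l)) n]
    have hcg : ∀ j ∈ range n, (if n - 1 - j = 0 then 0 else 1/((n:ℝ) - (n - 1 - j : ℕ)))
        = (if j = p then 0 else 1/((j:ℝ)+1)) := by
      intro j hj
      have hjn : j < n := Finset.mem_range.mp hj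
      by_cases hje : j = p
      · rw [if_pos (by omega), if_pos hje]
      · rw [if_neg (by omega), if_neg hje]
        congr 1
        have hc : ((n - 1 - j : ℕ) : ℝ) = (n:ℝ) - 1 - j := by
          have h : n - 1 - j + (j + 1) = n := by omega
          have := congrArg (fun x : ℕ => (x : ℝ)) h
          push_cast at this
          have hcast : ((n:ℕ):ℝ) = (p:ℝ)+1 := by push_cast [hnp]; ring
          linarith
        rw [hc]; ring
    rw [Finset.sum_congr rfl hcg]
    rw [show n = p + 1 from rfl, Finset.sum_range_succ, if_pos rfl, add_zero]
    apply Finset.sum_congr rfl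
    intro j hj
    rw [if_neg (by have := Finset.mem_range.mp hj; omega)]
  have hG2 : (∑ l ∈ range n, (if l = 0 then 0 else 1/((n:ℝ) + l)))
      = (∑ k ∈ range (2*p+1), 1/((k:ℝ)+1)) - (∑ k ∈ range n, 1/((k:ℝ)+1)) := by
    rw [show n = p + 1 from rfl, Finset.sum_range_succ']
    rw [if_pos rfl, add_zero]
    have hcg : ∀ l ∈ range p, (if l + 1 = 0 then (0:ℝ) else 1/((n:ℝ) + (l+1:ℕ)))
        = (fun k : ℕ => 1/((k:ℝ)+1)) (n + l) := by
      intro l _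
      rw [if_neg (by omega)]
      push_cast
      ring_nf
    rw [Finset.sum_congr rfl hcg]
    have := Finset.sum_range_add (fun k : ℕ => 1/((k:ℝ)+1)) n p
    have h2p : n + p = 2*p+1 := by omega
    rw [h2p] at this
    linarith [this]
  rw [hG1, hG2]
  have hH2n : (∑ k ∈ range (2*n), 1/((k:ℝ)+1))
      = (∑ k ∈ range (2*p+1), 1/((k:ℝ)+1)) + 1/(2*(n:ℝ)) := by
    rw [show 2*n = (2*p+1) + 1 from by omega, Finset.sum_range_succ]
    congr 1
    push_cast [hnp]
    ring
  have hHn : (∑ k ∈ range n, 1/((k:ℝ)+1))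
      = (∑ k ∈ range p, 1/((k:ℝ)+1)) + 1/(n:ℝ) := by
    rw [show n = p + 1 from rfl, Finset.sum_range_succ]
    congr 1
    push_cast [hnp]
    ring
  rw [hH2n, hHn]
  field_simp
  ring

theorem stmt_1 (n : ℕ) (hn : 0 < n) :
    ∑' l : ℕ, (if l = 0 ∨ l = n then 0 else 1 / ((l : ℝ) ^ 2 - (n : ℝ) ^ 2)) =
      3 / (4 * (n : ℝ) ^ 2) := by
  have hn' : (0:ℝ) < n := by exact_mod_cast hn
  set f : ℕ → ℝ := fun l => (if l = 0 ∨ l = n then 0 else 1 / ((l : ℝ) ^ 2 - (n : ℝ) ^ 2)) with hf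
  have htail : ∀ m : ℕ, f (m + (n+1)) = (1:ℝ)/(((m:ℝ)+1)*((m:ℝ)+1+2*n)) := by
    intro m
    rw [hf]
    simp only
    rw [if_neg (by omega)]
    congr 1
    push_cast
    ring
  have hsum : Summable f := by
    refine (summable_nat_add_iff (n+1)).1 ?_
    exact (tail_summable n).congr (fun m => (htail m).symm)
  have h1 := Summable.sum_add_tsum_nat_add (f := f) (n+1) hsum
  have h2 : ∑' (m : ℕ), f (m + (n+1)) = (1/(2*(n:ℝ))) * ∑ k ∈ range (2*n), 1/((k:ℝ)+1) := by
    rw [← (tail_hasSum n hn).tsum_eq]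
    exact tsum_congr htail
  rw [← h1, h2, finite_part n hn]
  ring
end

section
/- Let a be a real number not an integer. For all x in (-π, π), cos(ax) = (sin(aπ))/(aπ) + 2 ∑_{n=1}^∞ (-1)^{n+1} (a sin(aπ))/(π(n^2 − a^2)) cos(nx). -/
open Real Filter

noncomputable def myf (a : ℝ) : ℝ → ℂ :=
  fun t => Complex.cos ((a : ℂ) * (Real.arccos (Real.cos t) : ℂ))

lemma myf_periodic (a : ℝ) : Function.Periodic (myf a) (2 * π) := by
  intro t
  simp [myf, Real.cos_add_two_pi]

lemma myf_continuous (a : ℝ) : Continuous (myf a) := by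
  exact Complex.continuous_cos.comp (continuous_const.mul
    (Complex.continuous_ofReal.comp (Real.continuous_arccos.comp Real.continuous_cos)))

lemma myf_eq (a : ℝ) {t : ℝ} (ht : t ∈ Set.Icc (-π) π) :
    myf a t = Complex.cos ((a * t : ℝ) : ℂ) := by
  rcases le_total 0 t with h | h
  · rw [myf, Real.arccos_cos h ht.2]
    push_cast; ring_nf
  · have h1 : Real.arccos (Real.cos t) = -t := by
      rw [← Real.cos_neg, Real.arccos_cos (by linarith) (by linarith [ht.1])]
    rw [myf, h1]
    push_cast
    rw [show (a:ℂ) * (-t) = -(a*t) by ring, Complex.cos_neg]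

open intervalIntegral in
lemma key_int (r : ℝ) (hr : r ≠ 0) :
    ∫ x in (-π : ℝ)..π, Complex.exp (((r : ℝ) * Complex.I) * x) =
      ((2 * Real.sin (r * π) / r : ℝ) : ℂ) := by
  have hc : ((r : ℂ) * Complex.I) ≠ 0 := by simp [hr]
  rw [integral_exp_mul_complex hc]
  have e1 : (r : ℂ) * Complex.I * (π : ℝ) = ((r * π : ℝ) : ℂ) * Complex.I := by
    push_cast; ring
  have e2 : (r : ℂ) * Complex.I * ((-π : ℝ) : ℂ) = (-(r * π : ℝ) : ℂ) * Complex.I := by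
    push_cast; ring
  rw [e1, e2, Complex.exp_mul_I, Complex.exp_mul_I, Complex.cos_neg, Complex.sin_neg,
    ← Complex.ofReal_sin]
  have hπ : (r : ℂ) ≠ 0 := by exact_mod_cast hr
  field_simp
  push_cast
  field_simp
  ring

noncomputable def cc (a : ℝ) (n : ℤ) : ℝ :=
  (-1 : ℝ) ^ n * Real.sin (a * π) * a / (π * (a ^ 2 - (n : ℝ) ^ 2))

lemma cos_int_pi (n : ℤ) : Real.cos ((n : ℝ) * π) = (-1 : ℝ) ^ n := by
  simpa using Real.cos_int_mul_pi_sub 0 n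

lemma sin_shift (a : ℝ) (n : ℤ) :
    Real.sin ((a - n) * π) = (-1 : ℝ) ^ n * Real.sin (a * π) := by
  rw [show (a - n) * π = a * π - n * π by ring, Real.sin_sub, Real.sin_int_mul_pi,
    cos_int_pi]
  ring

lemma mul_cos (p q : ℂ) : Complex.exp (p * Complex.I) * Complex.cos q =
    (Complex.exp ((p + q) * Complex.I) + Complex.exp ((p - q) * Complex.I)) / 2 := by
  rw [Complex.cos, show ((p+q)*Complex.I) = p*Complex.I + q*Complex.I by ring,
    show ((p-q)*Complex.I) = p*Complex.I + -(q*Complex.I) by ring,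
    Complex.exp_add, Complex.exp_add]
  ring

instance fact_2pi : Fact (0 < 2 * π) := ⟨by positivity⟩

noncomputable def FF (a : ℝ) : C(AddCircle (2 * π), ℂ) :=
  ⟨(myf_periodic a).lift, by
    unfold Function.Periodic.lift
    exact (myf_continuous a).quotient_liftOn' _⟩

lemma FF_coe (a : ℝ) (t : ℝ) : FF a (t : AddCircle (2 * π)) = myf a t := rfl

lemma coeff_eq (a : ℝ) (ha : ∀ k : ℤ, a ≠ (k : ℝ)) (n : ℤ) :
    fourierCoeff (⇑(FF a)) n = ((cc a n : ℝ) : ℂ) := by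
  have hπ : (π : ℝ) ≠ 0 := Real.pi_ne_zero
  have hsub : a - (n : ℝ) ≠ 0 := sub_ne_zero.mpr (ha n)
  have hadd : a + (n : ℝ) ≠ 0 := by
    have := ha (-n)
    intro h; apply this; push_cast; linarith
  have hsq : a ^ 2 - (n : ℝ) ^ 2 ≠ 0 := by
    have := mul_ne_zero hsub hadd
    intro h; apply this; nlinarith
  rw [fourierCoeff_eq_intervalIntegral _ n (-π), show -π + 2 * π = π by ring]
  have hcong : Set.EqOn (fun x : ℝ => @fourier (2*π) (-n) (x : AddCircle (2*π)) • FF a (x : AddCircle (2*π)))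
      (fun x : ℝ => (Complex.exp (((a - n : ℝ) : ℂ) * Complex.I * x)
        + Complex.exp (((-(a + n) : ℝ) : ℂ) * Complex.I * x)) / 2)
      (Set.uIcc (-π) π) := by
    intro t ht
    rw [Set.uIcc_of_le (by linarith [Real.pi_pos]) ] at ht
    have hF : FF a (t : AddCircle (2*π)) = Complex.cos ((a * t : ℝ) : ℂ) := by
      rw [FF_coe, myf_eq a ht]
    simp only [smul_eq_mul, hF, fourier_coe_apply]
    have harg : 2 * (π:ℂ) * Complex.I * ((-n : ℤ) : ℂ) * (t : ℂ) / ((2 * π : ℝ) : ℂ)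
        = ((-(n:ℝ) * t : ℝ) : ℂ) * Complex.I := by
      have h0 : (π : ℂ) ≠ 0 := Complex.ofReal_ne_zero.mpr hπ
      push_cast
      field_simp
    rw [harg, mul_cos]
    congr 2 <;> push_cast <;> ring
  rw [intervalIntegral.integral_congr hcong]
  have hi1 : IntervalIntegrable (fun x : ℝ => Complex.exp (((a - n : ℝ) : ℂ) * Complex.I * x))
      MeasureTheory.volume (-π) π := (Continuous.intervalIntegrable (by fun_prop) _ _)
  have hi2 : IntervalIntegrable (fun x : ℝ => Complex.exp (((-(a + n) : ℝ) : ℂ) * Complex.I * x))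
      MeasureTheory.volume (-π) π := (Continuous.intervalIntegrable (by fun_prop) _ _)
  rw [intervalIntegral.integral_div, intervalIntegral.integral_add hi1 hi2,
    key_int (a - n) hsub, key_int (-(a + n)) (neg_ne_zero.mpr hadd)]
  have hsin1 : Real.sin ((a - n) * π) = (-1 : ℝ) ^ n * Real.sin (a * π) := sin_shift a n
  have hsin2 : Real.sin ((-(a + n)) * π) = -((-1 : ℝ) ^ n * Real.sin (a * π)) := by
    have h1 := sin_shift a (-n)
    push_cast at h1
    have h2 : (-1 : ℝ) ^ (-n) = (-1 : ℝ) ^ n := by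
      rw [zpow_neg, ← inv_zpow]; norm_num
    rw [show (-(a + (n:ℝ))) * π = -((a - -(n:ℝ)) * π) by ring, Real.sin_neg, h1, h2]
  have hre : ((1:ℝ)/(2*π)) * ((2 * ((-1:ℝ)^n * Real.sin (a*π)) / (a - n)
      + 2 * -((-1:ℝ)^n * Real.sin (a*π)) / -(a + (n:ℝ)))/2)
      = (-1:ℝ)^n * Real.sin (a*π) * a / (π * (a^2 - (n:ℝ)^2)) := by
    rw [show (2:ℝ) * -((-1:ℝ)^n * Real.sin (a*π)) / -(a + (n:ℝ))
        = 2 * ((-1:ℝ)^n * Real.sin (a*π)) / (a + (n:ℝ)) by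
      rw [div_eq_div_iff (by intro h; apply hadd; linarith) hadd]; ring]
    rw [div_add_div _ _ hsub hadd]
    field_simp
    ring
  rw [hsin1, hsin2, cc, Complex.real_smul]
  exact_mod_cast hre

lemma cc_summable (a : ℝ) : Summable (fun n : ℤ => cc a n) := by
  apply Summable.of_norm_bounded_eventually
    (g := fun n : ℤ => (2 * (|Real.sin (a*π) * a| / π)) * (1 / (n:ℝ)^2))
  · exact (summable_one_div_int_pow.mpr (by norm_num)).mul_left _
  · rw [Filter.eventually_cofinite]
    apply Set.Finite.subset (Set.finite_Icc (-(⌈(2*a^2+2 : ℝ)⌉) : ℤ) ⌈(2*a^2+2 : ℝ)⌉)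
    intro n hn
    by_contra hmem
    apply hn
    have hB : (2*a^2+2 : ℝ) ≤ ⌈(2*a^2+2 : ℝ)⌉ := Int.le_ceil _
    have hn2 : 2*a^2 + 2 < (n:ℝ)^2 := by
      simp only [Set.mem_Icc, not_and_or, not_le] at hmem
      rcases hmem with h | h
      · have h' : (n:ℝ) < -((⌈(2*a^2+2 : ℝ)⌉ : ℤ) : ℝ) := by exact_mod_cast h
        nlinarith
      · have h' : ((⌈(2*a^2+2 : ℝ)⌉ : ℤ) : ℝ) < n := by exact_mod_cast h
        nlinarith
    have hpos : 0 < (n:ℝ)^2 - a^2 := by nlinarith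
    have hne : (0:ℝ) < ((n:ℝ))^2 := by nlinarith
    have habs : ‖cc a n‖ = |Real.sin (a*π) * a| / (π * ((n:ℝ)^2 - a^2)) := by
      have h0 : |(-1:ℝ)^n| = 1 := by
        rcases Int.even_or_odd n with h | h
        · rw [h.neg_one_zpow]; norm_num
        · rw [h.neg_one_zpow]; norm_num
      rw [Real.norm_eq_abs, cc, abs_div, abs_mul, abs_mul, h0, one_mul]
      rw [abs_mul, abs_of_pos Real.pi_pos,
        show |a^2 - (n:ℝ)^2| = (n:ℝ)^2 - a^2 by rw [abs_of_neg (by linarith)]; ring,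
        ← abs_mul]
    rw [habs]
    have hπpos := Real.pi_pos
    rw [div_le_iff₀ (by positivity)]
    have expand : 2 * (|Real.sin (a*π) * a| / π) * (1 / (n:ℝ)^2) * (π * ((n:ℝ)^2 - a^2))
        = (2 * |Real.sin (a*π) * a| * ((n:ℝ)^2 - a^2)) / (n:ℝ)^2 := by
      field_simp
    rw [expand, le_div_iff₀ hne]
    nlinarith [abs_nonneg (Real.sin (a*π) * a)]

theorem stmt_14 (a : ℝ) (ha : ∀ k : ℤ, a ≠ (k : ℝ)) (x : ℝ)
    (hx : x ∈ Set.Ioo (-π) π) :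
    Tendsto (fun N : ℕ => Real.sin (a * π) / (a * π) +
        2 * ∑ n ∈ Finset.range N,
          (-1 : ℝ) ^ (n + 2) * (a * Real.sin (a * π)) /
              (π * (((n : ℝ) + 1) ^ 2 - a ^ 2)) *
            Real.cos (((n : ℝ) + 1) * x))
      atTop (nhds (Real.cos (a * x))) := by
  have hπ : (π : ℝ) ≠ 0 := Real.pi_ne_zero
  have ha0 : a ≠ 0 := by simpa using ha 0
  have hsum : Summable (fourierCoeff (⇑(FF a))) := by
    have h2 : Summable (fun n : ℤ => ((cc a n : ℝ) : ℂ)) :=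
      ((cc_summable a).hasSum.mapL Complex.ofRealCLM).summable
    exact h2.congr fun n => (coeff_eq a ha n).symm
  have hpoint := has_pointwise_sum_fourier_series_of_summable hsum (↑x : AddCircle (2*π))
  have hFx : (FF a) ((x : ℝ) : AddCircle (2*π)) = Complex.cos ((a*x : ℝ) : ℂ) := by
    rw [FF_coe]; exact myf_eq a ⟨le_of_lt hx.1, le_of_lt hx.2⟩
  rw [hFx] at hpoint
  have hterm : ∀ i : ℤ, fourierCoeff (⇑(FF a)) i • (fourier i ((x : ℝ) : AddCircle (2*π)))
      = ((cc a i : ℝ) : ℂ) * Complex.exp ((((i : ℝ) * x : ℝ) : ℂ) * Complex.I) := by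
    intro i
    rw [coeff_eq a ha i, smul_eq_mul, fourier_coe_apply]
    have h0 : (π : ℂ) ≠ 0 := Complex.ofReal_ne_zero.mpr hπ
    have h2π : (2 * (π:ℂ)) ≠ 0 := mul_ne_zero two_ne_zero h0
    congr 1
    push_cast
    congr 1
    rw [div_eq_iff h2π]
    ring
  rw [funext hterm] at hpoint
  have hre2 : HasSum (fun i : ℤ => cc a i * Real.cos ((i : ℝ) * x)) (Real.cos (a*x)) := by
    have hre := hpoint.mapL Complex.reCLM
    convert hre using 1
    · funext i
      show cc a i * Real.cos ((i:ℝ) * x)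
        = (((cc a i : ℝ) : ℂ) * Complex.exp ((((i:ℝ) * x : ℝ) : ℂ) * Complex.I)).re
      rw [Complex.mul_re, Complex.ofReal_re, Complex.ofReal_im, zero_mul, sub_zero,
        Complex.exp_ofReal_mul_I_re]
    · rw [Complex.reCLM_apply, ← Complex.ofReal_cos, Complex.ofReal_re]
  have h3 := hre2.nat_add_neg
  have hcc_neg : ∀ n : ℕ, cc a (-(n:ℤ)) = cc a (n:ℤ) := by
    intro n
    have hz : (-1 : ℝ) ^ (-(n:ℤ)) = (-1 : ℝ) ^ ((n:ℤ)) := by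
      rw [zpow_neg, ← inv_zpow]; norm_num
    rw [cc, cc, hz]; push_cast; ring_nf
  have h4 : HasSum (fun n : ℕ => 2 * (cc a (n:ℤ) * Real.cos (((n:ℤ):ℝ) * x)))
      (Real.cos (a*x) + cc a 0) := by
    have heq : (fun n : ℕ => cc a (n:ℤ) * Real.cos (((n:ℤ):ℝ) * x)
        + cc a (-(n:ℤ)) * Real.cos ((((-(n:ℤ)):ℤ):ℝ) * x))
        = (fun n : ℕ => 2 * (cc a (n:ℤ) * Real.cos (((n:ℤ):ℝ) * x))) := by
      funext n
      rw [hcc_neg n, show ((((-(n:ℤ)):ℤ):ℝ)) = -(((n:ℤ):ℝ)) by push_cast; ring, neg_mul,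
        Real.cos_neg]
      ring
    rw [heq] at h3
    simpa using h3
  have h5 := (hasSum_nat_add_iff' 1).2 h4
  have h6 := h5.tendsto_sum_nat
  have hcc0 : cc a 0 = Real.sin (a*π) / (a*π) := by
    have h1 : cc a 0 = Real.sin (a*π) * a / (π * a^2) := by rw [cc]; norm_num
    rw [h1, div_eq_div_iff (mul_ne_zero hπ (pow_ne_zero 2 ha0)) (mul_ne_zero ha0 hπ)]
    ring
  have h7 := h6.const_add (Real.sin (a*π) / (a*π))
  have hlim : Real.sin (a*π) / (a*π) + (Real.cos (a*x) + cc a 0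
      - ∑ i ∈ Finset.range 1, 2 * (cc a (i:ℤ) * Real.cos (((i:ℤ):ℝ) * x))) = Real.cos (a*x) := by
    simp [hcc0]
    ring
  rw [hlim] at h7
  refine Tendsto.congr (fun N => ?_) h7
  congr 1
  rw [Finset.mul_sum]
  refine Finset.sum_congr rfl fun n _ => ?_
  have hsub : a - ((n:ℝ)+1) ≠ 0 := by
    have h := ha ((n:ℤ)+1); intro hh; apply h; push_cast; linarith
  have hadd : a + ((n:ℝ)+1) ≠ 0 := by
    have h := ha (-((n:ℤ)+1)); intro hh; apply h; push_cast; linarith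
  have hq : ((n:ℝ)+1)^2 - a^2 ≠ 0 := by
    have := mul_ne_zero hsub hadd
    intro h; apply this; nlinarith
  have hq2 : a^2 - ((n:ℝ)+1)^2 ≠ 0 := by
    intro h; apply hq; linarith
  rw [cc, zpow_natCast]
  push_cast
  field_simp [hq, hq2]
  ring
end
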